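/- arXiv:1106.4602 — 7 statements merged into one kernel-verified Lean document; each statement's English description precedes it below -/
import Mathlib

section
/- In a free group, if two elements a and b commute, then there exists an element z and integers m, n such that a = z^m and b = z^n. -/
/-! The subgroup generated by `a` and `b` is commutative, and it is free by Nielsen–Schreier.
Two distinct basis elements of a free group never commute (their images in `S₃` under two
different transpositions do not), so a commutative free group has at most one basis element and
is cyclic. -/

namespace FreeGroup

variable {ι : Type*}

theorem eq_of_commute_of {x y : ι} (h : Commute (of x) (of y)) : x = y := by
  classical
  by_contra hxy
  let f : ι → Equiv.Perm (Fin 3) :=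
    fun i => if i = x then Equiv.swap 0 1 else if i = y then Equiv.swap 1 2 else 1
  have hf : f x * f y = f y * f x := by simpa using congrArg (lift f) h.eq
  simp only [f, if_pos rfl, if_neg (Ne.symm hxy)] at hf
  exact absurd hf (by decide)

instance isCyclic_of_subsingleton [Subsingleton ι] : IsCyclic (FreeGroup ι) := by
  cases isEmpty_or_nonempty ι with
  | inl => infer_instance
  | inr =>
    obtain ⟨i⟩ := ‹Nonempty ι›
    refine isCyclic_iff_exists_zpowers_eq_top.2 ⟨of i, ?_⟩
    have hof : (of : ι → FreeGroup ι) = fun _ => of i := funext fun j => by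
      rw [Subsingleton.elim j i]
    rw [Subgroup.zpowers_eq_closure, ← closure_range_of, hof, Set.range_const]

end FreeGroup

namespace IsFreeGroup

variable {G : Type*} [Group G] [IsFreeGroup G]

theorem isCyclic_of_isMulCommutative [IsMulCommutative G] : IsCyclic G := by
  obtain ⟨ι, ⟨b⟩⟩ := IsFreeGroup.nonempty_basis (G := G)
  have : Subsingleton ι := ⟨fun i j => FreeGroup.eq_of_commute_of
    (by simpa using congrArg b.repr (mul_comm' (b i) (b j)) : _ * _ = _ * _)⟩
  exact isCyclic_of_surjective b.repr.symm b.repr.symm.surjective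

end IsFreeGroup

/-- In a free group, if two elements commute, then they are both powers of a
common element. -/
theorem freeGroup_commute_common_power {α : Type*} (a b : FreeGroup α)
    (h : a * b = b * a) : ∃ (z : FreeGroup α) (m n : ℤ), a = z ^ m ∧ b = z ^ n := by
  set H := Subgroup.closure ({a, b} : Set (FreeGroup α))
  have : IsMulCommutative H := Subgroup.isMulCommutative_closure <| by
    rintro x (rfl | rfl) y (rfl | rfl) <;> simp [h]
  have : IsCyclic H := IsFreeGroup.isCyclic_of_isMulCommutative
  obtain ⟨z, hz⟩ := IsCyclic.exists_zpow_surjective (G := H)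
  obtain ⟨m, hm⟩ := hz ⟨a, Subgroup.subset_closure (by simp)⟩
  obtain ⟨n, hn⟩ := hz ⟨b, Subgroup.subset_closure (by simp)⟩
  exact ⟨z, m, n, by simpa using congrArg Subtype.val hm.symm,
    by simpa using congrArg Subtype.val hn.symm⟩
end

section
/- Let F₂ be the free group on generators x, y, and let a, b ∈ F₂ commute. If the image of a in the abelianization F₂ᵃᵇ ≅ ℤ² is part of a basis of ℤ², then b is a power of a. -/
/-!
By Nielsen–Schreier the subgroup generated by `a` and `b` is free; it is also abelian, so it
is cyclic, say `a = c ^ m` and `b = c ^ n`. In `ℤ²` the image of `a` is `m` times that of `c`,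
so it can only be part of a basis if `m = ±1`, and then `b = a ^ (m * n)`.
-/

/-- The abelianization map `F₂ → ℤ²`, sending the generators to the standard basis
vectors (written multiplicatively). -/
noncomputable def abMap : FreeGroup (Fin 2) →* Multiplicative (Fin 2 → ℤ) :=
  FreeGroup.lift fun i => Multiplicative.ofAdd (Pi.single i 1)

open Module Submodule

theorem FreeGroup.of_mul_of_ne_of_mul_of {α : Type*} {i j : α} (h : i ≠ j) :
    of i * of j ≠ of j * of i := by
  classical
  intro e
  simpa [toWord_mul, toWord_of, reduce, h] using congrArg toWord e

theorem IsFreeGroup.isCyclic_of_isMulCommutative_s1 (G : Type*) [Group G] [IsFreeGroup G]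
    [IsMulCommutative G] : IsCyclic G := by
  let e := toFreeGroup G
  have : Subsingleton (Generators G) := ⟨fun i j => by
    by_contra hij
    apply FreeGroup.of_mul_of_ne_of_mul_of hij
    simpa using congrArg e (mul_comm' (e.symm (.of i)) (e.symm (.of j)))⟩
  cases isEmpty_or_nonempty (Generators G)
  · have := e.symm.surjective.subsingleton
    infer_instance
  · have := uniqueOfSubsingleton (Classical.arbitrary (Generators G))
    exact isCyclic_of_surjective e.symm e.symm.surjective

theorem IsFreeGroup.exists_zpow_eq_of_commute {G : Type*} [Group G] [IsFreeGroup G] {a b : G}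
    (h : Commute a b) : ∃ c : G, ∃ m n : ℤ, a = c ^ m ∧ b = c ^ n := by
  let H := Subgroup.closure {a, b}
  have : IsMulCommutative H := Subgroup.isMulCommutative_closure <| by
    rintro x (rfl | rfl) y (rfl | rfl)
    exacts [rfl, h.eq, h.symm.eq, rfl]
  have := isCyclic_of_isMulCommutative_s1 H
  obtain ⟨c, hc⟩ := IsCyclic.exists_generator (α := H)
  obtain ⟨m, hm⟩ := hc ⟨a, Subgroup.subset_closure (by simp)⟩
  obtain ⟨n, hn⟩ := hc ⟨b, Subgroup.subset_closure (by simp)⟩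
  exact ⟨c, m, n, (congrArg Subtype.val hm).symm, (congrArg Subtype.val hn).symm⟩

theorem isUnit_of_span_smul_pair_eq_top {R M : Type*} [CommRing R] [AddCommGroup M]
    [Module R M] (hM : 2 ≤ finrank R M) {m : R} {v w : M} (h : span R {m • v, w} = ⊤) :
    IsUnit m := by
  have hind : LinearIndependent R ![m • v, w] :=
    linearIndependent_of_top_le_span_of_card_le_finrank
      (by rw [Matrix.range_cons_cons_empty, h]) (by simpa using hM)
  -- Writing `v = s • m • v + t • w` and comparing coefficients of `m • v` gives `m * s = 1`.
  obtain ⟨s, t, hst⟩ := mem_span_pair.mp (h ▸ mem_top : v ∈ span R {m • v, w})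
  have hcomb : (m * s - 1) • (m • v) + (m * t) • w = 0 :=
    calc _ = m • (s • m • v + t • w) - m • v := by module
      _ = 0 := by rw [hst, sub_self]
  have hms : m * s - 1 = 0 := (LinearIndependent.pair_iff.mp hind _ _ hcomb).1
  exact IsUnit.of_mul_eq_one s (sub_eq_zero.mp hms)

/-- If `a, b ∈ F₂` commute and the image of `a` in the abelianization `ℤ²` is part
of a basis of `ℤ²`, then `b` is a power of `a`. -/
theorem pow_of_commute_basis (a b : FreeGroup (Fin 2))
    (hcomm : a * b = b * a)
    (hbasis : ∃ w : Fin 2 → ℤ,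
      Submodule.span ℤ ({Multiplicative.toAdd (abMap a), w} : Set (Fin 2 → ℤ)) = ⊤) :
    ∃ n : ℤ, b = a ^ n := by
  obtain ⟨c, m, n, rfl, rfl⟩ := IsFreeGroup.exists_zpow_eq_of_commute hcomm
  obtain ⟨w, hw⟩ := hbasis
  rw [map_zpow, toAdd_zpow] at hw
  have hm : IsUnit m := isUnit_of_span_smul_pair_eq_top (by simp) hw
  refine ⟨m * n, ?_⟩
  rw [← zpow_mul, ← mul_assoc, Int.isUnit_mul_self hm, one_mul]
end

section
/- There is a well-defined surjective group homomorphism f from the pure braid group P₄ to the free group F₂ = ⟨x,y⟩ determined by f(A₁₂) = x, f(A₁₃) = y, f(A₂₃) = y⁻¹x⁻¹, f(A₁₄) = y⁻¹x⁻¹, f(A₂₄) = x y x⁻¹, f(A₃₄) = x. -/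
/-- Index type for the generators `A_{i,j}`, `i < j`, of the pure braid group. -/
def PBGen (n : ℕ) : Type := {p : Fin n × Fin n // p.1 < p.2}

/-- The free-group generator corresponding to `A_{i,j}`. -/
def A {n : ℕ} (i j : Fin n) (h : i < j) : FreeGroup (PBGen n) :=
  FreeGroup.of ⟨(i, j), h⟩

/-- The standard pure braid relators. -/
def pureBraidRels (n : ℕ) : Set (FreeGroup (PBGen n)) :=
  { w | ∃ (i j r s : Fin n) (hij : i < j) (hrs : r < s),
      (((i < r ∧ s < j) ∨ s < i) ∧
        w = (A r s hrs)⁻¹ * A i j hij * A r s hrs * (A i j hij)⁻¹)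
    ∨ (∃ hrj : r < j, s = i ∧
        w = (A r s hrs)⁻¹ * A i j hij * A r s hrs *
          (A r j hrj * A i j hij * (A r j hrj)⁻¹)⁻¹)
    ∨ (∃ hsj : s < j, r = i ∧
        w = (A r s hrs)⁻¹ * A i j hij * A r s hrs *
          (A i j hij * A s j hsj * A i j hij * (A s j hsj)⁻¹ * (A i j hij)⁻¹)⁻¹)
    ∨ (∃ (hrj : r < j) (hsj : s < j), r < i ∧ i < s ∧
        w = (A r s hrs)⁻¹ * A i j hij * A r s hrs *
          ((A r j hrj * A s j hsj * (A r j hrj)⁻¹ * (A s j hsj)⁻¹) * A i j hij *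
            (A r j hrj * A s j hsj * (A r j hrj)⁻¹ * (A s j hsj)⁻¹)⁻¹)⁻¹) }

/-- The pure braid group `Pₙ`, as a presented group. -/
def PureBraid (n : ℕ) : Type := PresentedGroup (pureBraidRels n)

instance (n : ℕ) : Group (PureBraid n) := by unfold PureBraid; infer_instance

/-- The generator `A_{i,j}` of the pure braid group. -/
def gen {n : ℕ} (i j : Fin n) (h : i < j) : PureBraid n :=
  PresentedGroup.of (⟨(i, j), h⟩ : PBGen n)

/-! The six images satisfy every pure braid relator of `P₄` (a finite check of identities
in `F₂`), so the assignment descends to `P₄`. The image contains `x = f(A₁₂)` and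
`y = f(A₁₃)`, which generate `F₂`. -/

open FreeGroup (of)

theorem FreeGroup.surjective_of_forall_of_mem_range {G α : Type*} [Group G]
    {f : G →* FreeGroup α} (h : ∀ a, of a ∈ f.range) : Function.Surjective f := by
  rw [← MonoidHom.range_eq_top, eq_top_iff, ← FreeGroup.closure_range_of, Subgroup.closure_le]
  exact Set.range_subset_iff.2 h

theorem lift_A {G : Type*} [Group G] {n : ℕ} (f : PBGen n → G) (i j : Fin n) (h : i < j) :
    FreeGroup.lift f (A i j h) = f ⟨(i, j), h⟩ :=
  FreeGroup.lift_apply_of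

-- Matching on values rather than on `Fin 4` literals lets `simp` evaluate this at the
-- `⟨k, _⟩` terms produced by `fin_cases`.
def p4ToF2Gen (g : PBGen 4) : FreeGroup (Fin 2) :=
  match g.1.1.val, g.1.2.val with
  | 0, 1 => of 0
  | 0, 2 => of 1
  | 1, 2 => (of 1)⁻¹ * (of 0)⁻¹
  | 0, 3 => (of 1)⁻¹ * (of 0)⁻¹
  | 1, 3 => of 0 * of 1 * (of 0)⁻¹
  | 2, 3 => of 0
  | _, _ => 1

theorem lift_p4ToF2Gen_rels : ∀ w ∈ pureBraidRels 4, FreeGroup.lift p4ToF2Gen w = 1 := by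
  rintro w ⟨i, j, r, s, hij, hrs, h⟩
  fin_cases i <;> fin_cases j <;> fin_cases r <;> fin_cases s <;>
  rcases h with ⟨_, rfl⟩ | ⟨_, _, rfl⟩ | ⟨_, _, rfl⟩ | ⟨_, _, _, _, rfl⟩ <;>
  first
    | (exfalso; simp at *; done)
    | (simp only [map_mul, map_inv, lift_A, p4ToF2Gen]; group)

def p4ToF2 : PureBraid 4 →* FreeGroup (Fin 2) :=
  PresentedGroup.toGroup lift_p4ToF2Gen_rels

theorem p4ToF2_gen (i j : Fin 4) (h : i < j) : p4ToF2 (gen i j h) = p4ToF2Gen ⟨(i, j), h⟩ :=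
  PresentedGroup.toGroup.of _

/-- The assignment `A₁₂ ↦ x`, `A₁₃ ↦ y`, `A₂₃ ↦ y⁻¹x⁻¹`, `A₁₄ ↦ y⁻¹x⁻¹`,
`A₂₄ ↦ xyx⁻¹`, `A₃₄ ↦ x` determines a well-defined surjective homomorphism
`P₄ → F₂`. -/
theorem P4_onto_F2 :
    ∃ f : PureBraid 4 →* FreeGroup (Fin 2),
      Function.Surjective f ∧
      f (gen 0 1 (by decide)) = FreeGroup.of 0 ∧
      f (gen 0 2 (by decide)) = FreeGroup.of 1 ∧
      f (gen 1 2 (by decide)) = (FreeGroup.of 1)⁻¹ * (FreeGroup.of 0)⁻¹ ∧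
      f (gen 0 3 (by decide)) = (FreeGroup.of 1)⁻¹ * (FreeGroup.of 0)⁻¹ ∧
      f (gen 1 3 (by decide)) = FreeGroup.of 0 * FreeGroup.of 1 * (FreeGroup.of 0)⁻¹ ∧
      f (gen 2 3 (by decide)) = FreeGroup.of 0 := by
  refine ⟨p4ToF2, FreeGroup.surjective_of_forall_of_mem_range fun a => ?_,
    p4ToF2_gen .., p4ToF2_gen .., p4ToF2_gen .., p4ToF2_gen .., p4ToF2_gen .., p4ToF2_gen ..⟩
  fin_cases a
  exacts [⟨gen 0 1 (by decide), p4ToF2_gen ..⟩, ⟨gen 0 2 (by decide), p4ToF2_gen ..⟩]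
end

section
/- There is a well-defined surjective group homomorphism f from the pure braid group Pₙ (n ≥ 3) to the free group F₂ = ⟨x,y⟩ defined for fixed indices i < j < k in {1,…,n} by f(A_{i,j}) = x, f(A_{i,k}) = y, f(A_{j,k}) = y⁻¹x⁻¹, and f(A_{r,s}) = 1 for all other generators. -/
/-! A generator `A_{a,b}` has nontrivial image only if both `a` and `b` lie in `{i, j, k}`.
Every relation involves three or four strands in increasing order; unless they are exactly
`i < j < k`, one of them lies outside `{i, j, k}`, and killing the generators on that strand
collapses the relation to a trivial identity. On the strands `i < j < k` the two remaining
relations become identities in `⟨x, y⟩` that follow from `x · y · y⁻¹x⁻¹ = 1`.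
The homomorphism is onto since `x` and `y` are images of generators. -/

section TripleIndices

variable {α : Type*} [LinearOrder α] {i j k a b c d : α}

theorem eq_of_lt_of_lt_of_mem_triple (hij : i < j) (hjk : j < k) (hab : a < b) (hbc : b < c)
    (ha : a ∈ ({i, j, k} : Set α)) (hb : b ∈ ({i, j, k} : Set α))
    (hc : c ∈ ({i, j, k} : Set α)) : a = i ∧ b = j ∧ c = k := by
  simp only [Set.mem_insert_iff, Set.mem_singleton_iff] at ha hb hc
  rcases ha with rfl | rfl | rfl <;> rcases hb with rfl | rfl | rfl <;>
    rcases hc with rfl | rfl | rfl <;> first | exact ⟨rfl, rfl, rfl⟩ | (exfalso; order)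

theorem eq_or_not_mem_triple_of_lt_of_lt (hij : i < j) (hjk : j < k) (hab : a < b)
    (hbc : b < c) :
    (a = i ∧ b = j ∧ c = k) ∨ a ∉ ({i, j, k} : Set α) ∨ b ∉ ({i, j, k} : Set α) ∨
      c ∉ ({i, j, k} : Set α) := by
  by_cases ha : a ∈ ({i, j, k} : Set α) <;> by_cases hb : b ∈ ({i, j, k} : Set α) <;>
    by_cases hc : c ∈ ({i, j, k} : Set α)
  · exact Or.inl (eq_of_lt_of_lt_of_mem_triple hij hjk hab hbc ha hb hc)
  all_goals tauto

theorem not_mem_triple_of_lt_of_lt_of_lt (hij : i < j) (hjk : j < k) (hab : a < b)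
    (hbc : b < c) (hcd : c < d) :
    a ∉ ({i, j, k} : Set α) ∨ b ∉ ({i, j, k} : Set α) ∨ c ∉ ({i, j, k} : Set α) ∨
      d ∉ ({i, j, k} : Set α) := by
  rcases eq_or_not_mem_triple_of_lt_of_lt hij hjk hab hbc with ⟨rfl, rfl, rfl⟩ | h | h | h
  · simp only [Set.mem_insert_iff, Set.mem_singleton_iff]
    right; right; right
    rintro (rfl | rfl | rfl) <;> order
  all_goals tauto

end TripleIndices

section TripleImage

variable {α G : Type*} [LinearOrder α] [Group G] (i j k : α) (x y : G) {a b c d : α}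

def tripleImage (a b : α) : G :=
  if a = i ∧ b = j then x
  else if a = i ∧ b = k then y
  else if a = j ∧ b = k then y⁻¹ * x⁻¹
  else 1

variable {i j k}

@[simp]
theorem tripleImage_of_left_not_mem (ha : a ∉ ({i, j, k} : Set α)) :
    tripleImage i j k x y a b = 1 := by
  simp only [Set.mem_insert_iff, Set.mem_singleton_iff, not_or] at ha
  simp [tripleImage, ha.1, ha.2.1]

@[simp]
theorem tripleImage_of_right_not_mem (hb : b ∉ ({i, j, k} : Set α)) :
    tripleImage i j k x y a b = 1 := by
  simp only [Set.mem_insert_iff, Set.mem_singleton_iff, not_or] at hb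
  simp [tripleImage, hb.2.1, hb.2.2]

theorem tripleImage_ij : tripleImage i j k x y i j = x := by simp [tripleImage]

theorem tripleImage_ik (hjk : j < k) : tripleImage i j k x y i k = y := by
  simp [tripleImage, hjk.ne']

theorem tripleImage_jk (hij : i < j) : tripleImage i j k x y j k = y⁻¹ * x⁻¹ := by
  simp [tripleImage, hij.ne']

theorem tripleImage_of_not_mem_pairs
    (h : ¬((a = i ∧ b = j) ∨ (a = i ∧ b = k) ∨ (a = j ∧ b = k))) :
    tripleImage i j k x y a b = 1 := by
  simp only [not_or] at h
  simp [tripleImage, h.1, h.2.1, h.2.2]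

theorem commute_tripleImage (h : a ∉ ({i, j, k} : Set α) ∨ b ∉ ({i, j, k} : Set α) ∨
      c ∉ ({i, j, k} : Set α) ∨ d ∉ ({i, j, k} : Set α)) :
    Commute (tripleImage i j k x y a b) (tripleImage i j k x y c d) := by
  rcases h with h | h | h | h <;> simp [h]

theorem tripleImage_conj_of_right_eq_left (hij : i < j) (hjk : j < k) (hab : a < b)
    (hbc : b < c) :
    (tripleImage i j k x y a b)⁻¹ * tripleImage i j k x y b c * tripleImage i j k x y a b =
      tripleImage i j k x y a c * tripleImage i j k x y b c * (tripleImage i j k x y a c)⁻¹ := by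
  rcases eq_or_not_mem_triple_of_lt_of_lt hij hjk hab hbc with ⟨rfl, rfl, rfl⟩ | h | h | h
  · rw [tripleImage_ij, tripleImage_ik x y hjk, tripleImage_jk x y hij]
    group
  all_goals simp [h]

theorem tripleImage_conj_of_left_eq_left (hij : i < j) (hjk : j < k) (hab : a < b)
    (hbc : b < c) :
    (tripleImage i j k x y a b)⁻¹ * tripleImage i j k x y a c * tripleImage i j k x y a b =
      tripleImage i j k x y a c * tripleImage i j k x y b c * tripleImage i j k x y a c *
        (tripleImage i j k x y b c)⁻¹ * (tripleImage i j k x y a c)⁻¹ := by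
  rcases eq_or_not_mem_triple_of_lt_of_lt hij hjk hab hbc with ⟨rfl, rfl, rfl⟩ | h | h | h
  · rw [tripleImage_ij, tripleImage_ik x y hjk, tripleImage_jk x y hij]
    group
  all_goals simp [h]

theorem tripleImage_conj_of_interleaved (hij : i < j) (hjk : j < k) (hab : a < b)
    (hbc : b < c) (hcd : c < d) :
    (tripleImage i j k x y a c)⁻¹ * tripleImage i j k x y b d * tripleImage i j k x y a c =
      (tripleImage i j k x y a d * tripleImage i j k x y c d * (tripleImage i j k x y a d)⁻¹ *
          (tripleImage i j k x y c d)⁻¹) * tripleImage i j k x y b d *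
        (tripleImage i j k x y a d * tripleImage i j k x y c d * (tripleImage i j k x y a d)⁻¹ *
          (tripleImage i j k x y c d)⁻¹)⁻¹ := by
  rcases not_mem_triple_of_lt_of_lt_of_lt hij hjk hab hbc hcd with h | h | h | h <;> simp [h]

end TripleImage

namespace PureBraid

variable {n : ℕ} {G : Type*} [Group G] {i j k : Fin n} (x y : G)

theorem lift_tripleImage_A (p q : Fin n) (h : p < q) :
    FreeGroup.lift (fun g : PBGen n => tripleImage i j k x y g.1.1 g.1.2) (A p q h) =
      tripleImage i j k x y p q :=
  FreeGroup.lift_apply_of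

theorem lift_tripleImage_rel (hij : i < j) (hjk : j < k) :
    ∀ w ∈ pureBraidRels n,
      FreeGroup.lift (fun g : PBGen n => tripleImage i j k x y g.1.1 g.1.2) w = 1 := by
  rintro w ⟨a, b, c, d, hab, hcd, hw⟩
  rcases hw with ⟨hpos, rfl⟩ | ⟨-, rfl, rfl⟩ | ⟨hdb, rfl, rfl⟩ |
      ⟨-, hdb, hca, had, rfl⟩ <;>
    simp only [map_mul, map_inv, lift_tripleImage_A] <;> rw [mul_inv_eq_one]
  · refine Commute.inv_mul_cancel (commute_tripleImage x y ?_)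
    rcases hpos with ⟨hac, hdb⟩ | hda
    · rcases not_mem_triple_of_lt_of_lt_of_lt hij hjk hac hcd hdb with h | h | h | h <;> tauto
    · rcases not_mem_triple_of_lt_of_lt_of_lt hij hjk hcd hda hab with h | h | h | h <;> tauto
  · exact tripleImage_conj_of_right_eq_left x y hij hjk hcd hab
  · exact tripleImage_conj_of_left_eq_left x y hij hjk hcd hdb
  · exact tripleImage_conj_of_interleaved x y hij hjk hca had hdb

def tripleHom (hij : i < j) (hjk : j < k) : PureBraid n →* G :=
  PresentedGroup.toGroup (lift_tripleImage_rel x y hij hjk)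

theorem tripleHom_gen (hij : i < j) (hjk : j < k) (p q : Fin n) (h : p < q) :
    tripleHom x y hij hjk (gen p q h) = tripleImage i j k x y p q :=
  PresentedGroup.toGroup.of _

end PureBraid

theorem pureBraid_onto_F2_general (n : ℕ) (i j k : Fin n)
    (hij : i < j) (hjk : j < k) :
    ∃ f : PureBraid n →* FreeGroup (Fin 2),
      Function.Surjective f ∧
      f (gen i j hij) = FreeGroup.of 0 ∧
      f (gen i k (hij.trans hjk)) = FreeGroup.of 1 ∧
      f (gen j k hjk) = (FreeGroup.of 1)⁻¹ * (FreeGroup.of 0)⁻¹ ∧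
      ∀ (r s : Fin n) (hrs : r < s),
        ¬((r = i ∧ s = j) ∨ (r = i ∧ s = k) ∨ (r = j ∧ s = k)) →
          f (gen r s hrs) = 1 := by
  set f := PureBraid.tripleHom (FreeGroup.of (0 : Fin 2)) (FreeGroup.of 1) hij hjk
  have hx : f (gen i j hij) = FreeGroup.of 0 := by
    rw [PureBraid.tripleHom_gen, tripleImage_ij]
  have hy : f (gen i k (hij.trans hjk)) = FreeGroup.of 1 := by
    rw [PureBraid.tripleHom_gen, tripleImage_ik _ _ hjk]
  have hsection : f.comp (FreeGroup.lift ![gen i j hij, gen i k (hij.trans hjk)]) =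
      MonoidHom.id _ := by
    ext t
    fin_cases t <;> simpa
  refine ⟨f, fun w => ⟨_, DFunLike.congr_fun hsection w⟩, hx, hy, ?_, ?_⟩
  · rw [PureBraid.tripleHom_gen, tripleImage_jk _ _ hij]
  · intro r s hrs hrs'
    rw [PureBraid.tripleHom_gen, tripleImage_of_not_mem_pairs _ _ hrs']

/-- For `n ≥ 3` and fixed `i < j < k`, the assignment `A_{i,j} ↦ x`,
`A_{i,k} ↦ y`, `A_{j,k} ↦ y⁻¹x⁻¹`, and `A_{r,s} ↦ 1` for all other generators,
determines a well-defined surjective homomorphism `Pₙ → F₂`. -/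
theorem pureBraid_onto_F2 (n : ℕ) (hn : 3 ≤ n) (i j k : Fin n)
    (hij : i < j) (hjk : j < k) :
    ∃ f : PureBraid n →* FreeGroup (Fin 2),
      Function.Surjective f ∧
      f (gen i j hij) = FreeGroup.of 0 ∧
      f (gen i k (hij.trans hjk)) = FreeGroup.of 1 ∧
      f (gen j k hjk) = (FreeGroup.of 1)⁻¹ * (FreeGroup.of 0)⁻¹ ∧
      ∀ (r s : Fin n) (hrs : r < s),
        ¬((r = i ∧ s = j) ∨ (r = i ∧ s = k) ∨ (r = j ∧ s = k)) →
          f (gen r s hrs) = 1 :=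
  pureBraid_onto_F2_general n i j k hij hjk
end

section
/- Let G be a group whose center Z(G) is infinite cyclic generated by z, and let t : G → ℤ be a homomorphism. The transvection map x ↦ x·z^{t(x)} is an endomorphism of G, and it is an automorphism if and only if t(z) = 0 or t(z) = −2. -/
/-!
Since `z` is central, `x ↦ x * z ^ t x` is a homomorphism, and composing the transvections of
`s` and `t` gives `x ↦ x * z ^ (t x + s x + t x * s z)`. If `1 + t z = ±1`, so that
`(1 + t z) ^ 2 = 1`, the transvection of `-(1 + t z) • t` is therefore inverse to that of `t`.
Conversely, a preimage `x` of `z` equals `z ^ (1 - t x)`, and applying `t` to this gives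
`(1 - t x) * (1 + t z) = 1`.
-/

open Multiplicative

section Transvection

variable {G : Type*} [Group G] {z : G}

def transvection (hz : z ∈ Subgroup.center G) (t : G →* Multiplicative ℤ) : G →* G where
  toFun x := x * z ^ toAdd (t x)
  map_one' := by simp
  map_mul' x y := by
    have hcomm : z ^ toAdd (t x) * y = y * z ^ toAdd (t x) :=
      (Subgroup.mem_center_iff.mp (Subgroup.zpow_mem _ hz _) y).symm
    simp only [map_mul, toAdd_mul, zpow_add, mul_assoc]
    rw [← mul_assoc (z ^ toAdd (t x)) y, hcomm, mul_assoc]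

variable (hz : z ∈ Subgroup.center G) (t : G →* Multiplicative ℤ)

theorem transvection_apply (x : G) : transvection hz t x = x * z ^ toAdd (t x) := rfl

theorem toAdd_map_mul_zpow (x : G) (k : ℤ) :
    toAdd (t (x * z ^ k)) = toAdd (t x) + k * toAdd (t z) := by
  rw [map_mul, toAdd_mul, map_zpow, toAdd_zpow, smul_eq_mul]

theorem transvection_transvection (s : G →* Multiplicative ℤ) (x : G) :
    transvection hz s (transvection hz t x) =
      x * z ^ (toAdd (t x) + toAdd (s x) + toAdd (t x) * toAdd (s z)) := by
  rw [transvection_apply, transvection_apply, toAdd_map_mul_zpow, mul_assoc, ← zpow_add]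
  ring_nf

theorem transvection_bijective_of_isUnit (h : IsUnit (1 + toAdd (t z))) :
    Function.Bijective (transvection hz t) := by
  set u := 1 + toAdd (t z)
  have hu : u * u = 1 := Int.isUnit_mul_self h
  have mul_zpow_eq_self : ∀ (x : G) (e : ℤ), e = 0 → x * z ^ e = x := by
    rintro x e rfl
    rw [zpow_zero, mul_one]
  refine Function.bijective_iff_has_inverse.mpr
    ⟨transvection hz (t ^ (-u)), fun x => ?_, fun x => ?_⟩ <;>
  · rw [transvection_transvection]
    simp only [MonoidHom.zpow_apply, toAdd_zpow, smul_eq_mul]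
    exact mul_zpow_eq_self x _ (by linear_combination (-toAdd (t x)) * hu)

theorem isUnit_of_transvection_surjective (h : Function.Surjective (transvection hz t)) :
    IsUnit (1 + toAdd (t z)) := by
  obtain ⟨x, hx⟩ := h z
  have hx' : x = z ^ (1 - toAdd (t x)) := by
    rw [zpow_sub, zpow_one]
    exact eq_mul_inv_of_mul_eq hx
  have htx : toAdd (t x) = (1 - toAdd (t x)) * toAdd (t z) := by
    conv_lhs => rw [hx']
    rw [map_zpow, toAdd_zpow, smul_eq_mul]
  exact IsUnit.of_mul_eq_one (1 - toAdd (t x)) (by linear_combination -htx)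

theorem transvection_bijective_iff :
    Function.Bijective (transvection hz t) ↔ IsUnit (1 + toAdd (t z)) :=
  ⟨fun h => isUnit_of_transvection_surjective hz t h.2, transvection_bijective_of_isUnit hz t⟩

end Transvection

theorem transvection_endo_and_auto_iff_general {G : Type*} [Group G] (z : G)
    (hz : Subgroup.zpowers z = Subgroup.center G)
    (t : G →* Multiplicative ℤ) :
    (∀ x y : G,
        (x * y) * z ^ Multiplicative.toAdd (t (x * y)) =
          (x * z ^ Multiplicative.toAdd (t x)) * (y * z ^ Multiplicative.toAdd (t y))) ∧
      (Function.Bijective (fun x : G => x * z ^ Multiplicative.toAdd (t x)) ↔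
        Multiplicative.toAdd (t z) = 0 ∨ Multiplicative.toAdd (t z) = -2) := by
  have hzc : z ∈ Subgroup.center G := hz ▸ Subgroup.mem_zpowers z
  refine ⟨(transvection hzc t).map_mul, ?_⟩
  change Function.Bijective (transvection hzc t) ↔ _
  rw [transvection_bijective_iff, Int.isUnit_iff]
  omega

/-- Let `G` be a group whose center is infinite cyclic generated by `z`, and
`t : G → ℤ` a homomorphism.  The transvection map `x ↦ x * z ^ t x` is an
endomorphism of `G`, and it is an automorphism if and only if `t z = 0` or
`t z = -2`. -/
theorem transvection_endo_and_auto_iff {G : Type*} [Group G] (z : G)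
    (hz : Subgroup.zpowers z = Subgroup.center G) (hinf : ¬ IsOfFinOrder z)
    (t : G →* Multiplicative ℤ) :
    (∀ x y : G,
        (x * y) * z ^ Multiplicative.toAdd (t (x * y)) =
          (x * z ^ Multiplicative.toAdd (t x)) * (y * z ^ Multiplicative.toAdd (t y))) ∧
      (Function.Bijective (fun x : G => x * z ^ Multiplicative.toAdd (t x)) ↔
        Multiplicative.toAdd (t z) = 0 ∨ Multiplicative.toAdd (t z) = -2) :=
  transvection_endo_and_auto_iff_general z hz t
end

section
/- Any group that can be generated by two elements and is residually free is isomorphic to the trivial group, ℤ, ℤ², or the free group F₂ of rank two. -/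
/-- A group `G` is residually free if every nontrivial element has nontrivial image
under some homomorphism to a free group. -/
def ResiduallyFree (G : Type u) [Group G] : Prop :=
  ∀ x : G, x ≠ 1 → ∃ (S : Type u) (f : G →* FreeGroup S), f x ≠ 1

/-!
If the generators `a`, `b` commute, `G` is a finitely generated abelian group; it is
torsion-free because free groups are, so `G ≅ ℤⁿ` with `n ≤ 2`. Otherwise some homomorphism `f`
to a free group separates `ab` from `ba`. By Nielsen–Schreier `f(G)` is free; being generated by
two non-commuting elements it has rank exactly two. Then `F₂ ↠ G ↠ f(G) ≅ F₂` is a surjective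
endomorphism of `F₂`, hence injective since finitely generated residually finite groups are
Hopfian (Mal'cev), and so `F₂ → G` is an isomorphism.
-/

universe u

open Function Cardinal Subgroup

theorem Subgroup.commute_of_closure_eq_top {G : Type*} [Group G] {s : Set G}
    (hs : closure s = ⊤) (hcomm : ∀ x ∈ s, ∀ y ∈ s, Commute x y) (x y : G) : Commute x y := by
  have := isMulCommutative_closure hcomm
  exact setLike_mul_comm (s := closure s) (hs ▸ mem_top x) (hs ▸ mem_top y)

theorem Equiv.Perm.exists_extending_mul_left {G : Type*} [Group G] (B : Set G) [Finite B]
    (g : G) : ∃ σ : Perm B, ∀ (u : B) (hu : g * u ∈ B), σ u = ⟨g * u, hu⟩ := by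
  obtain ⟨σ, hσ⟩ := Perm.exists_extending_pair (α := {u : B // g * u ∈ B})
    (fun u => u.1) (fun u => ⟨g * u.1, u.2⟩) (fun u v h => Subtype.ext h)
    (fun u v h => Subtype.ext (Subtype.ext (mul_left_cancel (congrArg Subtype.val h))))
  exact ⟨σ, fun u hu => hσ ⟨u, hu⟩⟩

namespace FreeGroup

variable {α : Type*}

theorem lift_mk_apply_one {B : Set (FreeGroup α)} (σ : α → Equiv.Perm B)
    (hσ : ∀ s (u : B) (hu : of s * (u : FreeGroup α) ∈ B), σ s u = ⟨of s * u, hu⟩) :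
    ∀ {L : List (α × Bool)} (hL : ∀ L', L' <:+ L → mk L' ∈ B),
      lift σ (mk L) ⟨1, hL [] L.nil_suffix⟩ = ⟨mk L, hL L L.suffix_refl⟩
  | [], _ => rfl
  | (s, b) :: L, hL => by
    have ih := lift_mk_apply_one σ hσ (L := L) fun L' h => hL L' (h.trans (L.suffix_cons _))
    have hmk : mk ((s, b) :: L) = (bif b then of s else (of s)⁻¹) * mk L := by
      cases b <;> simp [mul_mk, of, inv_mk, invRev]
    have hlift :
        lift σ (mk ((s, b) :: L)) = (bif b then σ s else (σ s)⁻¹) * lift σ (mk L) := by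
      simp only [lift_mk, List.map_cons, List.prod_cons]
    rw [hlift, Equiv.Perm.mul_apply, ih]
    cases b
    · rw [cond_false, Equiv.Perm.inv_eq_iff_eq, hσ]
      · simp [hmk]
      · simpa [hmk] using hL L (L.suffix_cons _)
    · simpa [hmk] using hσ s _ (by simpa [hmk] using hL _ (List.suffix_refl _))

/-- Each letter acts on the finite set of suffixes of `w` by a permutation extending left
multiplication, and then `w` moves `1` to `w`. -/
instance instResiduallyFinite : Group.ResiduallyFinite (FreeGroup α) := by
  classical
  refine Group.residuallyFinite_of_forall_exists_finite_monoidHom fun w hw => ?_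
  let B : Set (FreeGroup α) := {v | v ∈ w.toWord.tails.map mk}
  have : Finite B := (List.finite_toSet _).to_subtype
  choose σ hσ using fun s => Equiv.Perm.exists_extending_mul_left B (of s)
  refine ⟨Equiv.Perm B, inferInstance, inferInstance, lift σ, fun h => hw ?_⟩
  have hB : ∀ L', L' <:+ w.toWord → mk L' ∈ B := fun L' h =>
    List.mem_map_of_mem ((List.mem_tails _ _).2 h)
  have := congrArg Subtype.val (lift_mk_apply_one σ hσ hB)
  simp only [mk_toWord, h, Equiv.Perm.one_apply] at this
  exact this.symm

end FreeGroup

instance MonoidHom.finite_of_fg {G Q : Type*} [Group G] [Group.FG G] [Group Q] [Finite Q] :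
    Finite (G →* Q) := by
  obtain ⟨s, hs⟩ := Group.FG.out (G := G)
  exact Finite.of_injective (fun χ : G →* Q => fun x : s => χ x)
    fun χ ψ h => MonoidHom.eq_of_eqOn_dense hs fun x hx => congrFun h ⟨x, hx⟩

theorem Group.ResiduallyFinite.injective_of_surjective {G : Type*} [Group G] [Group.FG G]
    [Group.ResiduallyFinite G] {f : G →* G} (hf : Surjective f) : Injective f := by
  refine (injective_iff_map_eq_one f).2 fun x hx => ?_
  by_contra hne
  obtain ⟨H, hxH⟩ := Group.exists_finiteIndexNormalSubgroup_notMem x hne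
  have hcomp : Injective fun χ : G →* G ⧸ H.toSubgroup => χ.comp f :=
    fun χ ψ h => (MonoidHom.cancel_right hf).1 h
  obtain ⟨χ, hχ⟩ := Finite.injective_iff_surjective.1 hcomp (QuotientGroup.mk' H.toSubgroup)
  have : QuotientGroup.mk' H.toSubgroup x = 1 := by simp [← hχ, hx]
  exact hxH ((QuotientGroup.eq_one_iff x).1 this)

/-- Homomorphisms to `ℤ/2` are determined by their values on `s`, so `2 ^ rank ≤ 2 ^ #s`. -/
theorem IsFreeGroup.mk_generators_le {H : Type u} [Group H] [IsFreeGroup H] {s : Set H}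
    (hs : s.Finite) (h : closure s = ⊤) : #(IsFreeGroup.Generators H) ≤ #s := by
  let K := ULift.{u} (Multiplicative (ZMod 2))
  have hinj : Injective fun f : IsFreeGroup.Generators H → K => s.domRestrict (lift f) :=
    fun f g hfg => lift.injective (MonoidHom.eq_of_eqOn_dense h fun x hx => congrFun hfg ⟨x, hx⟩)
  have hpow : (2 : Cardinal) ^ #(IsFreeGroup.Generators H) ≤ 2 ^ #s := by
    simpa [← power_def, K] using mk_le_of_injective hinj
  obtain ⟨n, hn⟩ := lt_aleph0.1 hs.lt_aleph0
  rw [hn] at hpow ⊢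
  by_contra hlt
  have hsucc : (n : Cardinal) + 1 ≤ #(IsFreeGroup.Generators H) := by
    rw [← succ_natCast]
    exact Order.succ_le_of_lt (not_le.1 hlt)
  have := (power_le_power_left two_ne_zero hsucc).trans hpow
  norm_cast at this
  exact (Nat.pow_lt_pow_succ one_lt_two).not_ge this

theorem IsFreeGroup.nonempty_generators_equiv_fin_two {H : Type*} [Group H] [IsFreeGroup H]
    {p q : H} (h : closure {p, q} = ⊤) (hpq : ¬Commute p q) :
    Nonempty (IsFreeGroup.Generators H ≃ Fin 2) := by
  have hle : #(IsFreeGroup.Generators H) ≤ 2 :=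
    (mk_generators_le (Set.toFinite _) h).trans (mk_insert_le.trans (by norm_num))
  have hnt : Nontrivial (IsFreeGroup.Generators H) := by
    by_contra hs
    rw [not_nontrivial_iff_subsingleton] at hs
    let e := IsFreeGroup.toFreeGroup H
    have hcomm := commute_of_closure_eq_top (FreeGroup.closure_range_of _)
      (by rintro _ ⟨s, rfl⟩ _ ⟨t, rfl⟩; rw [Subsingleton.elim s t]; exact .refl _) (e p) (e q)
    exact hpq (by simpa using hcomm.map e.symm)
  rw [← mk_eq_nat_iff, Nat.cast_ofNat]
  exact le_antisymm hle (two_le_iff.2 (exists_pair_ne _))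

theorem nonempty_mulEquiv_freeGroup_of_generators_equiv {G F ι : Type*} [Group G] [Group F]
    [IsFreeGroup F] [Finite ι] {v : ι → G} (hv : closure (Set.range v) = ⊤) (f : G →* F)
    -- `f.range` is free by Nielsen–Schreier (`subgroupIsFreeOfIsFree`).
    (e : IsFreeGroup.Generators f.range ≃ ι) : Nonempty (G ≃* FreeGroup ι) := by
  let π : FreeGroup ι →* G := FreeGroup.lift v
  have hπ : Surjective π := by
    rw [← MonoidHom.range_eq_top, FreeGroup.range_lift_eq_closure, hv]
  let ε : FreeGroup ι →* FreeGroup ι :=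
    ((IsFreeGroup.toFreeGroup f.range).trans (FreeGroup.freeGroupCongr e)).toMonoidHom.comp
      (f.rangeRestrict.comp π)
  have hε : Surjective ε := by
    simpa only [ε, MonoidHom.coe_comp, MulEquiv.coe_toMonoidHom] using
      (MulEquiv.surjective _).comp (f.rangeRestrict_surjective.comp hπ)
  have hπ' : Injective π := by
    have := Group.ResiduallyFinite.injective_of_surjective hε
    simp only [ε, MonoidHom.coe_comp] at this
    exact this.of_comp.of_comp
  exact ⟨(MulEquiv.ofBijective π ⟨hπ', hπ⟩).symm⟩

theorem CommGroup.exists_mulEquiv_multiplicative_fin_int {G ι : Type*} [CommGroup G]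
    [IsMulTorsionFree G] [Fintype ι] {v : ι → G} (hv : closure (Set.range v) = ⊤) :
    ∃ n ≤ Fintype.card ι, Nonempty (G ≃* Multiplicative (Fin n → ℤ)) := by
  have hspan : Submodule.span ℤ (Set.range (Additive.ofMul ∘ v)) = ⊤ := by
    rw [← Submodule.toAddSubgroup_inj, Submodule.span_int_eq_addSubgroupClosure,
      Submodule.top_toAddSubgroup, Set.range_comp, Equiv.image_eq_preimage_symm]
    exact (Subgroup.toAddSubgroup_closure _).symm.trans (by rw [hv]; rfl)
  have : Module.Finite ℤ (Additive G) := ⟨(Set.finite_range _).toFinset, by simpa using hspan⟩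
  obtain ⟨n, b⟩ := Module.basisOfFiniteTypeTorsionFree' (R := ℤ) (M := Additive G)
  refine ⟨n, ?_, ⟨AddEquiv.toMultiplicative b.equivFun.toAddEquiv⟩⟩
  simpa [Module.finrank_eq_card_basis b] using finrank_le_of_span_eq_top hspan

namespace ResiduallyFree

variable {G : Type u} [Group G]

theorem exists_map_ne (hG : ResiduallyFree G) {x y : G} (hxy : x ≠ y) :
    ∃ (S : Type u) (f : G →* FreeGroup S), f x ≠ f y := by
  obtain ⟨S, f, hf⟩ := hG (x * y⁻¹) (mul_inv_eq_one.not.2 hxy)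
  exact ⟨S, f, fun h => hf (by rw [map_mul, map_inv, h, mul_inv_cancel])⟩

theorem isMulTorsionFree (hG : ResiduallyFree G) : IsMulTorsionFree G where
  pow_left_injective n hn x y hxy := by
    by_contra hne
    obtain ⟨S, f, hf⟩ := hG.exists_map_ne hne
    exact hf (IsMulTorsionFree.pow_left_injective hn (by simpa using congrArg f hxy))

theorem exists_not_commute (hG : ResiduallyFree G) {a b : G} (hab : ¬Commute a b) :
    ∃ (S : Type u) (f : G →* FreeGroup S), ¬Commute (f a) (f b) := by
  obtain ⟨S, f, hf⟩ := hG.exists_map_ne hab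
  exact ⟨S, f, fun h => hf (by rw [map_mul, map_mul, h.eq])⟩

end ResiduallyFree

theorem nonempty_mulEquiv_of_closure_pair_of_commute {G : Type*} [Group G] [IsMulTorsionFree G]
    {a b : G} (hab : closure {a, b} = ⊤) (hc : Commute a b) :
    Nonempty (G ≃* PUnit) ∨ Nonempty (G ≃* Multiplicative ℤ) ∨
      Nonempty (G ≃* Multiplicative (ℤ × ℤ)) := by
  let : CommGroup G :=
    { mul_comm := commute_of_closure_eq_top hab (by
        rintro _ (rfl | rfl) _ (rfl | rfl)
        exacts [.refl _, hc, hc.symm, .refl _]) }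
  obtain ⟨n, hn, ⟨e⟩⟩ := CommGroup.exists_mulEquiv_multiplicative_fin_int (v := ![a, b])
    (by rwa [Matrix.range_cons_cons_empty])
  rw [Fintype.card_fin] at hn
  interval_cases n
  · exact .inl ⟨e.trans MulEquiv.ofUnique⟩
  · exact .inr (.inl ⟨e.trans (AddEquiv.toMultiplicative
      (LinearEquiv.funUnique (Fin 1) ℤ ℤ).toAddEquiv)⟩)
  · exact .inr (.inr ⟨e.trans (AddEquiv.toMultiplicative
      (LinearEquiv.finTwoArrow ℤ ℤ).toAddEquiv)⟩)

theorem nonempty_mulEquiv_freeGroup_of_closure_pair_of_not_commute {G F : Type*} [Group G]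
    [Group F] [IsFreeGroup F] {a b : G} (hab : closure {a, b} = ⊤) (f : G →* F)
    (hf : ¬Commute (f a) (f b)) : Nonempty (G ≃* FreeGroup (Fin 2)) := by
  have hgen : closure {f.rangeRestrict a, f.rangeRestrict b} = ⊤ := by
    rw [← Set.image_pair, ← MonoidHom.map_closure, hab, ← MonoidHom.range_eq_map,
      MonoidHom.range_eq_top]
    exact f.rangeRestrict_surjective
  obtain ⟨e⟩ := IsFreeGroup.nonempty_generators_equiv_fin_two hgen
    fun h => hf (by simpa using h.map f.range.subtype)
  exact nonempty_mulEquiv_freeGroup_of_generators_equiv (v := ![a, b])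
    (by rwa [Matrix.range_cons_cons_empty]) f e

/-- A two-generator residually free group is trivial, `ℤ`, `ℤ²`, or the free group
of rank two. -/
theorem two_generator_residuallyFree {G : Type u} [Group G]
    (hgen : ∃ a b : G, Subgroup.closure ({a, b} : Set G) = ⊤)
    (hrf : ResiduallyFree G) :
    Nonempty (G ≃* PUnit) ∨ Nonempty (G ≃* Multiplicative ℤ) ∨
      Nonempty (G ≃* Multiplicative (ℤ × ℤ)) ∨
      Nonempty (G ≃* FreeGroup (Fin 2)) := by
  obtain ⟨a, b, hab⟩ := hgen
  by_cases hc : Commute a b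
  · have := hrf.isMulTorsionFree
    obtain h | h | h := nonempty_mulEquiv_of_closure_pair_of_commute hab hc
    exacts [.inl h, .inr (.inl h), .inr (.inr (.inl h))]
  · obtain ⟨S, f, hf⟩ := hrf.exists_not_commute hc
    exact .inr (.inr (.inr
      (nonempty_mulEquiv_freeGroup_of_closure_pair_of_not_commute hab f hf)))
end

section
/- Let G be a group with infinite cyclic center Z = ⟨z⟩ such that G ≅ Z × G/Z. Then every automorphism of G descends to an automorphism of G/Z, giving a surjective homomorphism Aut(G) → Aut(G/Z) which splits, and its kernel is the group of transvection automorphisms (automorphisms that induce the identity on G/Z). -/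
/-!
An automorphism of `G` preserves the characteristic subgroup `Z`, hence descends to `G/Z`; it
induces the identity there exactly when every displacement `x⁻¹ e(x)` lies in `Z = ⟨z⟩`. As `Z`
is central, `x ↦ x⁻¹ e(x)` is then a homomorphism `G → Z ≅ ℤ`, i.e. `e` is a transvection.
A splitting `s` of `G → G/Z` gives `G ≅ Z × G/Z`, and `f ↦ id_Z × f` is a homomorphic section
of `Aut(G) → Aut(G/Z)`, which is therefore surjective.
-/

open Subgroup QuotientGroup

namespace MulAut

variable {G : Type*} [Group G] (H : Subgroup G) [H.Characteristic]

noncomputable def quotient : MulAut G →* MulAut (G ⧸ H) where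
  toFun e := QuotientGroup.congr H H e (characteristic_iff_map_eq.mp inferInstance e)
  map_one' := by ext q; induction q using QuotientGroup.induction_on; rfl
  map_mul' _ _ := by ext q; induction q using QuotientGroup.induction_on; rfl

@[simp]
theorem quotient_apply_mk (e : MulAut G) (x : G) : quotient H e (x : G ⧸ H) = (e x : G ⧸ H) :=
  rfl

theorem mem_ker_quotient_iff (e : MulAut G) : e ∈ (quotient H).ker ↔ ∀ x, x⁻¹ * e x ∈ H := by
  simp only [MonoidHom.mem_ker, MulEquiv.ext_iff, QuotientGroup.forall_mk, quotient_apply_mk,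
    one_apply, eq_comm, QuotientGroup.eq]

end MulAut

namespace QuotientGroup

variable {G : Type*} [Group G] {N : Subgroup G} [N.Normal] {s : G ⧸ N →* G}

theorem mk_section (hs : (mk' N).comp s = .id _) (q : G ⧸ N) : (s q : G ⧸ N) = q :=
  DFunLike.congr_fun hs q

theorem mul_inv_section_mk_mem (hs : (mk' N).comp s = .id _) (x : G) : x * (s x)⁻¹ ∈ N := by
  rw [← eq_one_iff, mk_mul, mk_inv, mk_section hs, mul_inv_cancel]

noncomputable def mulEquivProdOfSection (hN : N ≤ center G) (hs : (mk' N).comp s = .id _) :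
    G ≃* N × (G ⧸ N) where
  toFun x := (⟨x * (s x)⁻¹, mul_inv_section_mk_mem hs x⟩, x)
  invFun p := p.1 * s p.2
  left_inv x := inv_mul_cancel_right x _
  right_inv := by
    rintro ⟨⟨n, hn⟩, q⟩
    have hq : ((n * s q : G) : G ⧸ N) = q := by
      rw [mk_mul, (eq_one_iff n).mpr hn, one_mul, mk_section hs]
    ext <;> simp [hq]
  map_mul' x y := by
    have hy := mem_center_iff.mp (hN (mul_inv_section_mk_mem hs y))
    ext
    · change x * y * (s (x * y : G))⁻¹ = x * (s x)⁻¹ * (y * (s y)⁻¹)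
      rw [mk_mul, map_mul, mul_assoc x (s x)⁻¹, hy]
      group
    · rfl

theorem mk_mulEquivProdOfSection_symm (hN : N ≤ center G) (hs : (mk' N).comp s = .id _)
    (p : N × (G ⧸ N)) : ((mulEquivProdOfSection hN hs).symm p : G ⧸ N) = p.2 := by
  obtain ⟨⟨n, hn⟩, q⟩ := p
  change ((n * s q : G) : G ⧸ N) = q
  rw [mk_mul, (eq_one_iff n).mpr hn, one_mul, mk_section hs]

noncomputable def mulAutLiftOfSection (hN : N ≤ center G) (hs : (mk' N).comp s = .id _) :
    MulAut (G ⧸ N) →* MulAut G where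
  toFun f := (MulAut.congr (mulEquivProdOfSection hN hs)).symm (.prodCongr (.refl N) f)
  map_one' := by ext; exact (mulEquivProdOfSection hN hs).symm_apply_apply _
  map_mul' _ _ := by
    ext
    simp only [MulAut.congr_symm_apply, MulEquiv.trans_apply, MulAut.mul_apply,
      MulEquiv.apply_symm_apply]
    rfl

theorem mk_mulAutLiftOfSection_apply (hN : N ≤ center G) (hs : (mk' N).comp s = .id _)
    (f : MulAut (G ⧸ N)) (x : G) : (mulAutLiftOfSection hN hs f x : G ⧸ N) = f x :=
  mk_mulEquivProdOfSection_symm hN hs _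

end QuotientGroup

theorem MulAut.quotient_comp_mulAutLiftOfSection {G : Type*} [Group G] {N : Subgroup G}
    [N.Characteristic] {s : G ⧸ N →* G} (hN : N ≤ center G) (hs : (mk' N).comp s = .id _) :
    (quotient N).comp (mulAutLiftOfSection hN hs) = .id _ := by
  ext f q
  induction q using QuotientGroup.induction_on
  simp [mk_mulAutLiftOfSection_apply]

section Transvection

variable {G : Type*} [Group G]

theorem inv_mul_map_mul_of_mem_center {f : G →* G} (hf : ∀ x, x⁻¹ * f x ∈ center G) (x y : G) :
    (x * y)⁻¹ * f (x * y) = x⁻¹ * f x * (y⁻¹ * f y) :=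
  calc (x * y)⁻¹ * f (x * y) = y⁻¹ * (x⁻¹ * f x) * f y := by rw [map_mul]; group
    _ = x⁻¹ * f x * (y⁻¹ * f y) := by rw [mem_center_iff.mp (hf x) y⁻¹]; group

theorem forall_inv_mul_mem_zpowers_iff {z : G} (hz : z ∈ center G) (hinf : ¬IsOfFinOrder z)
    (f : G →* G) :
    (∀ x, x⁻¹ * f x ∈ zpowers z) ↔
      ∃ t : G →* Multiplicative ℤ, ∀ x, f x = x * z ^ Multiplicative.toAdd (t x) := by
  refine ⟨fun h => ?_, fun ⟨t, ht⟩ x => ?_⟩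
  · have hinj : Function.Injective (zpowersHom G z) :=
      (injective_zpow_iff_not_isOfFinOrder.mpr hinf).comp Multiplicative.toAdd.injective
    let δ : G →* (zpowersHom G z).range :=
      { toFun x := ⟨x⁻¹ * f x, h x⟩
        map_one' := by simp
        map_mul' x y := Subtype.ext <|
          inv_mul_map_mul_of_mem_center (fun x => zpowers_le.mpr hz (h x)) x y }
    refine ⟨(MonoidHom.ofInjective hinj).symm.toMonoidHom.comp δ, fun x => ?_⟩
    have hδ : z ^ Multiplicative.toAdd ((MonoidHom.ofInjective hinj).symm (δ x)) = x⁻¹ * f x :=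
      congrArg Subtype.val ((MonoidHom.ofInjective hinj).apply_symm_apply (δ x))
    simp only [MulEquiv.coe_toMonoidHom, MonoidHom.coe_comp, Function.comp_apply, hδ,
      mul_inv_cancel_left]
  · rw [ht, inv_mul_cancel_left]
    exact zpow_mem_zpowers z _

end Transvection

/-- Let `G` be a group with infinite cyclic center `Z = ⟨z⟩` such that the quotient
map `G → G/Z` splits (so `G ≅ Z × G/Z`).  Then every automorphism of `G` descends
to an automorphism of `G/Z`, giving a surjective homomorphism
`Aut(G) → Aut(G/Z)` which splits, and whose kernel consists exactly of the
transvection automorphisms. -/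
theorem aut_descends_to_quotient_by_center {G : Type*} [Group G] (z : G)
    (hz : Subgroup.zpowers z = Subgroup.center G) (hinf : ¬ IsOfFinOrder z)
    (hsplit : ∃ s : G ⧸ Subgroup.center G →* G,
      (QuotientGroup.mk' (Subgroup.center G)).comp s =
        MonoidHom.id (G ⧸ Subgroup.center G)) :
    ∃ π : MulAut G →* MulAut (G ⧸ Subgroup.center G),
      (∀ (e : MulAut G) (x : G), π e (QuotientGroup.mk x) = QuotientGroup.mk (e x)) ∧
      Function.Surjective π ∧
      (∃ s : MulAut (G ⧸ Subgroup.center G) →* MulAut G,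
        π.comp s = MonoidHom.id (MulAut (G ⧸ Subgroup.center G))) ∧
      (∀ e : MulAut G, e ∈ π.ker ↔
        ∃ t : G →* Multiplicative ℤ,
          ∀ x : G, e x = x * z ^ Multiplicative.toAdd (t x)) := by
  obtain ⟨s, hs⟩ := hsplit
  have hsection := MulAut.quotient_comp_mulAutLiftOfSection le_rfl hs
  refine ⟨MulAut.quotient (center G), MulAut.quotient_apply_mk _, ?_, ⟨_, hsection⟩, fun e => ?_⟩
  · exact Function.LeftInverse.surjective (DFunLike.congr_fun hsection)
  · rw [MulAut.mem_ker_quotient_iff, ← hz]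
    exact forall_inv_mul_mem_zpowers_iff (hz ▸ mem_zpowers z) hinf e.toMonoidHom
end
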